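/- If P is strictly stochastically transitive, then the unique Kemeny median is given by the Copeland ranking σ*_P(i) = 1 + Σ_{k≠i} 1{p_{i,k} < 1/2}, i.e., this map is a permutation of {1,...,n} and it satisfies (p_{i,j} - 1/2)(σ*_P(j) - σ*_P(i)) > 0 for all i < j. -/
import Mathlib

open Finset

/-- The set of ordered pairs (i,j) with i < j. -/
def pairs (n : ℕ) : Finset (Fin n × Fin n) :=
  Finset.univ.filter fun p => p.1 < p.2

/-- Kendall tau distance between two permutations. -/
noncomputable def dtau {n : ℕ} (σ σ' : Equiv.Perm (Fin n)) : ℝ :=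
  ∑ p ∈ pairs n,
    if (((σ p.1 : ℕ) : ℤ) - ((σ p.2 : ℕ) : ℤ)) * (((σ' p.1 : ℕ) : ℤ) - ((σ' p.2 : ℕ) : ℤ)) < 0
    then 1 else 0

/-- Expected Kendall tau distance L_P(σ) = E_{Σ∼P}[d_τ(Σ,σ)]. -/
noncomputable def L {n : ℕ} (P : Equiv.Perm (Fin n) → ℝ) (σ : Equiv.Perm (Fin n)) : ℝ :=
  ∑ τ : Equiv.Perm (Fin n), P τ * dtau τ σ

/-- Pairwise probability p_{i,j} = P{Σ(i) < Σ(j)}. -/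
noncomputable def pp {n : ℕ} (P : Equiv.Perm (Fin n) → ℝ) (i j : Fin n) : ℝ :=
  ∑ τ : Equiv.Perm (Fin n), P τ * (if τ i < τ j then 1 else 0)

/-- P is a probability distribution on S_n. -/
def IsProb {n : ℕ} (P : Equiv.Perm (Fin n) → ℝ) : Prop :=
  (∀ τ, 0 ≤ P τ) ∧ ∑ τ : Equiv.Perm (Fin n), P τ = 1

/-- σ is a Kemeny median of P. -/
def IsMedian {n : ℕ} (P : Equiv.Perm (Fin n) → ℝ) (σ : Equiv.Perm (Fin n)) : Prop :=
  ∀ τ, L P σ ≤ L P τ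

/-- L*_P = min_σ L_P(σ). -/
noncomputable def Lstar {n : ℕ} (P : Equiv.Perm (Fin n) → ℝ) : ℝ :=
  ⨅ σ : Equiv.Perm (Fin n), L P σ

/-- Stochastic transitivity. -/
def StochTrans {n : ℕ} (P : Equiv.Perm (Fin n) → ℝ) : Prop :=
  ∀ i j k : Fin n, 1/2 ≤ pp P i j → 1/2 ≤ pp P j k → 1/2 ≤ pp P i k

/-- Strict stochastic transitivity. -/
def StrictStochTrans {n : ℕ} (P : Equiv.Perm (Fin n) → ℝ) : Prop :=
  StochTrans P ∧ ∀ i j : Fin n, i < j → pp P i j ≠ 1/2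

section Aux

variable {n : ℕ} {P : Equiv.Perm (Fin n) → ℝ}

lemma pp_self (i : Fin n) : pp P i i = 0 := by simp [pp]

lemma pp_add (hP : IsProb P) {i j : Fin n} (h : i ≠ j) :
    pp P i j + pp P j i = 1 := by
  rw [pp, pp, ← Finset.sum_add_distrib]
  have : ∀ τ : Equiv.Perm (Fin n), τ ∈ Finset.univ →
      P τ * (if τ i < τ j then (1:ℝ) else 0) + P τ * (if τ j < τ i then (1:ℝ) else 0)
        = P τ := by
    intro τ _
    have hne : τ i ≠ τ j := fun he => h (τ.injective he)
    rcases lt_or_gt_of_ne hne with hlt | hgt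
    · simp [hlt, asymm hlt]
    · simp [hgt, asymm hgt]
  rw [Finset.sum_congr rfl this, hP.2]

lemma ne_of_beats {i j : Fin n} (h : 1/2 < pp P i j) : i ≠ j := by
  rintro rfl
  rw [pp_self] at h
  norm_num at h

lemma pp_ne_half (hP : IsProb P) (hT : StrictStochTrans P) {i j : Fin n} (h : i ≠ j) :
    pp P i j ≠ 1/2 := by
  rcases lt_or_gt_of_ne h with hlt | hgt
  · exact hT.2 i j hlt
  · intro he
    have h2 := hT.2 j i hgt
    have := pp_add hP h.symm
    apply h2; linarith

lemma beats_or (hP : IsProb P) (hT : StrictStochTrans P) {i j : Fin n} (h : i ≠ j) :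
    1/2 < pp P i j ∨ 1/2 < pp P j i := by
  by_contra hc
  push_neg at hc
  have hsum := pp_add hP h
  have hne := pp_ne_half hP hT h
  apply hne; linarith

lemma beats_asymm (hP : IsProb P) {i j : Fin n} (h : 1/2 < pp P i j) :
    ¬ (1/2 < pp P j i) := by
  intro h2
  have hsum := pp_add hP (ne_of_beats h)
  linarith

lemma beats_trans (hP : IsProb P) (hT : StrictStochTrans P) {i j k : Fin n}
    (h1 : 1/2 < pp P i j) (h2 : 1/2 < pp P j k) : 1/2 < pp P i k := by
  have hik : i ≠ k := by
    rintro rfl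
    exact beats_asymm hP h1 h2
  exact lt_of_le_of_ne (hT.1 i j k h1.le h2.le) (Ne.symm (pp_ne_half hP hT hik))

lemma sign_lemma₁ (a b c d : ℤ) (hcd : c < d) : (a - b) * (c - d) < 0 ↔ b < a := by
  constructor
  · intro h; by_contra hba; push_neg at hba; nlinarith
  · intro h; nlinarith

lemma sign_lemma₂ (a b c d : ℤ) (hcd : d < c) : (a - b) * (c - d) < 0 ↔ a < b := by
  constructor
  · intro h; by_contra hba; push_neg at hba; nlinarith
  · intro h; nlinarith

lemma L_eq (hP : IsProb P) (σ : Equiv.Perm (Fin n)) :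
    L P σ = ∑ p ∈ pairs n,
      (if σ p.2 < σ p.1 then pp P p.1 p.2 else 1 - pp P p.1 p.2) := by
  rw [L]
  simp_rw [dtau, Finset.mul_sum]
  rw [Finset.sum_comm]
  apply Finset.sum_congr rfl
  intro p hp
  have hpij : p.1 < p.2 := by simpa [pairs] using hp
  have hne : σ p.1 ≠ σ p.2 := fun he => absurd (σ.injective he) (ne_of_lt hpij)
  rcases lt_or_gt_of_ne hne with hlt | hgt
  · rw [if_neg (asymm hlt)]
    have hd : ((σ p.1 : ℕ) : ℤ) < ((σ p.2 : ℕ) : ℤ) := by exact_mod_cast hlt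
    have key : ∀ τ : Equiv.Perm (Fin n),
        ((((τ p.1 : ℕ) : ℤ) - ((τ p.2 : ℕ) : ℤ)) *
          ((((σ p.1 : ℕ) : ℤ)) - ((σ p.2 : ℕ) : ℤ)) < 0) ↔ τ p.2 < τ p.1 := by
      intro τ
      rw [sign_lemma₁ _ _ _ _ hd, Fin.lt_def]
      exact Nat.cast_lt
    have : (∑ τ : Equiv.Perm (Fin n), P τ *
        (if (((τ p.1 : ℕ) : ℤ) - ((τ p.2 : ℕ) : ℤ)) *
          ((((σ p.1 : ℕ) : ℤ)) - ((σ p.2 : ℕ) : ℤ)) < 0 then (1:ℝ) else 0))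
        = pp P p.2 p.1 := by
      apply Finset.sum_congr rfl
      intro τ _
      rw [if_congr (key τ) rfl rfl]
    rw [this]
    have := pp_add hP (ne_of_lt hpij)
    linarith
  · rw [if_pos hgt]
    have hd : ((σ p.2 : ℕ) : ℤ) < ((σ p.1 : ℕ) : ℤ) := by exact_mod_cast hgt
    have key : ∀ τ : Equiv.Perm (Fin n),
        ((((τ p.1 : ℕ) : ℤ) - ((τ p.2 : ℕ) : ℤ)) *
          ((((σ p.1 : ℕ) : ℤ)) - ((σ p.2 : ℕ) : ℤ)) < 0) ↔ τ p.1 < τ p.2 := by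
      intro τ
      rw [sign_lemma₂ _ _ _ _ hd, Fin.lt_def]
      exact Nat.cast_lt
    apply Finset.sum_congr rfl
    intro τ _
    rw [if_congr (key τ) rfl rfl]

lemma perm_val_eq_card (ρ : Equiv.Perm (Fin n)) (i : Fin n) :
    ((ρ i : ℕ)) = (Finset.univ.filter fun k => ρ k < ρ i).card := by
  have himg : Finset.image ρ (Finset.univ.filter fun k => ρ k < ρ i)
      = Finset.Iio (ρ i) := by
    ext m
    simp only [Finset.mem_image, Finset.mem_filter, Finset.mem_univ, true_and,
      Finset.mem_Iio]
    constructor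
    · rintro ⟨k, hk, rfl⟩; exact hk
    · intro hm; exact ⟨ρ.symm m, by simpa using hm, by simp⟩
  have hc := Finset.card_image_of_injective
    (Finset.univ.filter fun k => ρ k < ρ i) ρ.injective
  rw [himg, Fin.card_Iio] at hc
  exact hc

lemma perm_eq_of_lt_iff (τ σ : Equiv.Perm (Fin n))
    (h : ∀ i j, τ i < τ j ↔ σ i < σ j) : τ = σ := by
  apply Equiv.ext
  intro i
  apply Fin.ext
  rw [perm_val_eq_card τ i, perm_val_eq_card σ i]
  congr 1
  apply Finset.filter_congr
  intro k _
  simpa using h k i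

end Aux

theorem stmt_6 {n : ℕ} (P : Equiv.Perm (Fin n) → ℝ)
    (hP : IsProb P) (hT : StrictStochTrans P) :
    ∃ σ : Equiv.Perm (Fin n),
      IsMedian P σ ∧ (∀ τ, IsMedian P τ → τ = σ) ∧
      (∀ i : Fin n, (σ i : ℕ) + 1 =
        1 + (Finset.univ.filter fun k => k ≠ i ∧ pp P i k < 1/2).card) ∧
      (∀ i j : Fin n, i < j →
        (pp P i j - 1/2) * (((σ j : ℕ) : ℝ) - ((σ i : ℕ) : ℝ)) > 0) := by
  classical
  -- the set of "beaters" of i and the Copeland count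
  set B : Fin n → Finset (Fin n) := fun i => Finset.univ.filter fun k => 1/2 < pp P k i
    with hB
  have hnotself : ∀ i, i ∉ B i := by
    intro i hi
    rw [hB] at hi
    simp only [Finset.mem_filter, Finset.mem_univ, true_and] at hi
    exact absurd rfl (ne_of_beats hi)
  have hcard_lt : ∀ i j, 1/2 < pp P i j → (B i).card < (B j).card := by
    intro i j hij
    apply Finset.card_lt_card
    have hsub : B i ⊆ B j := by
      intro k hk
      simp only [hB, Finset.mem_filter, Finset.mem_univ, true_and] at hk ⊢
      exact beats_trans hP hT hk hij
    rw [Finset.ssubset_iff_of_subset hsub]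
    refine ⟨i, ?_, hnotself i⟩
    simp only [hB, Finset.mem_filter, Finset.mem_univ, true_and]
    exact hij
  have hlt_n : ∀ i, (B i).card < n := by
    intro i
    have : (B i).card < Finset.univ.card :=
      Finset.card_lt_card ((Finset.ssubset_univ_iff).mpr
        (fun he => hnotself i (he ▸ Finset.mem_univ i)))
    simpa using this
  set g : Fin n → Fin n := fun i => ⟨(B i).card, hlt_n i⟩ with hg
  have hginj : Function.Injective g := by
    intro i j hij
    by_contra hne
    rcases beats_or hP hT hne with h | h
    · have := hcard_lt _ _ h
      rw [hg] at hij
      simp only [Fin.mk.injEq] at hij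
      omega
    · have := hcard_lt _ _ h
      rw [hg] at hij
      simp only [Fin.mk.injEq] at hij
      omega
  set σs : Equiv.Perm (Fin n) :=
    Equiv.ofBijective g (Finite.injective_iff_bijective.mp hginj) with hσs
  have hσapp : ∀ i, σs i = g i := fun i => rfl
  have hval : ∀ i, (σs i : ℕ) = (B i).card := fun i => rfl
  -- order characterization
  have horder : ∀ i j : Fin n, 1/2 < pp P i j → σs i < σs j := by
    intro i j h
    rw [Fin.lt_def, hval, hval]
    exact hcard_lt _ _ h
  have horder' : ∀ i j : Fin n, i ≠ j → (σs i < σs j ↔ 1/2 < pp P i j) := by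
    intro i j hne
    constructor
    · intro hlt
      rcases beats_or hP hT hne with h | h
      · exact h
      · exact absurd (horder _ _ h) (asymm hlt)
    · exact horder _ _
  -- strict optimality
  have hstrict : ∀ τ : Equiv.Perm (Fin n), τ ≠ σs → L P σs < L P τ := by
    intro τ hτ
    rw [L_eq hP, L_eq hP]
    apply Finset.sum_lt_sum
    · intro p hp
      have hpij : p.1 < p.2 := by simpa [pairs] using hp
      have hne : p.1 ≠ p.2 := ne_of_lt hpij
      have hsum := pp_add hP hne
      rcases beats_or hP hT hne with h | h
      · rw [if_neg (asymm (horder _ _ h))]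
        split
        · linarith
        · exact le_rfl
      · have hσ : σs p.2 < σs p.1 := horder _ _ h
        rw [if_pos hσ]
        split
        · exact le_rfl
        · linarith
    · -- find a pair where orders differ
      have hib : ∃ i j, ¬ (τ i < τ j ↔ σs i < σs j) := by
        by_contra hc
        push_neg at hc
        exact hτ (perm_eq_of_lt_iff τ σs hc)
      obtain ⟨i, j, hij⟩ := hib
      have hne : i ≠ j := by
        rintro rfl
        simp at hij
      -- choose the ordered pair (a,b) with a < b among {i,j}
      have key : ∀ a b : Fin n, a < b → ¬ (τ a < τ b ↔ σs a < σs b) →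
          (if σs b < σs a then pp P a b else 1 - pp P a b) <
          (if τ b < τ a then pp P a b else 1 - pp P a b) := by
        intro a b hab hdiff
        have hne' : a ≠ b := ne_of_lt hab
        have hsum := pp_add hP hne'
        have hτne : τ a ≠ τ b := fun he => hne' (τ.injective he)
        rcases beats_or hP hT hne' with h | h
        · have hσ : σs a < σs b := horder _ _ h
          have hτo : τ b < τ a := by
            rcases lt_or_gt_of_ne hτne with h1 | h1
            · exact absurd (iff_of_true h1 hσ) hdiff
            · exact h1
          rw [if_neg (asymm hσ), if_pos hτo]
          linarith
        · have hσ : σs b < σs a := horder _ _ h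
          have hτo : τ a < τ b := by
            rcases lt_or_gt_of_ne hτne with h1 | h1
            · exact h1
            · exact absurd (iff_of_false (asymm h1) (asymm hσ)) hdiff
          rw [if_pos hσ, if_neg (asymm hτo)]
          linarith
      rcases lt_or_gt_of_ne hne with hlt | hgt
      · refine ⟨(i, j), by simp [pairs, hlt], key i j hlt hij⟩
      · refine ⟨(j, i), by simp [pairs, hgt], ?_⟩
        apply key j i hgt
        intro hiff
        apply hij
        have hτne : τ i ≠ τ j := fun he => hne (τ.injective he)
        have hσne : σs i ≠ σs j := fun he => hne (σs.injective he)
        constructor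
        · intro h1
          rcases lt_or_gt_of_ne hσne with h2 | h2
          · exact h2
          · exact absurd (hiff.mpr h2) (asymm h1)
        · intro h1
          rcases lt_or_gt_of_ne hτne with h2 | h2
          · exact h2
          · exact absurd (hiff.mp h2) (asymm h1)
  have hmed : IsMedian P σs := by
    intro τ
    by_cases h : τ = σs
    · rw [h]
    · exact (hstrict τ h).le
  refine ⟨σs, hmed, ?_, ?_, ?_⟩
  · intro τ hm
    by_contra hne
    have h1 := hstrict τ hne
    have h2 := hm σs
    linarith
  · intro i
    have hset : B i = Finset.univ.filter fun k => k ≠ i ∧ pp P i k < 1/2 := by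
      rw [hB]
      apply Finset.filter_congr
      intro k _
      constructor
      · intro h
        have hk : k ≠ i := ne_of_beats h
        have := pp_add hP hk.symm
        exact ⟨hk, by linarith⟩
      · rintro ⟨hk, h⟩
        have := pp_add hP hk.symm
        linarith
    rw [hval, hset]
    omega
  · intro i j hij
    have hne : i ≠ j := ne_of_lt hij
    rcases beats_or hP hT hne with h | h
    · have hσ : σs i < σs j := horder _ _ h
      have : ((σs i : ℕ) : ℝ) < ((σs j : ℕ) : ℝ) := by exact_mod_cast hσ
      have hp : 0 < pp P i j - 1/2 := by linarith
      exact mul_pos hp (by linarith)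
    · have hσ : σs j < σs i := horder _ _ h
      have : ((σs j : ℕ) : ℝ) < ((σs i : ℕ) : ℝ) := by exact_mod_cast hσ
      have hsum := pp_add hP hne
      have hp : pp P i j - 1/2 < 0 := by linarith
      exact mul_pos_of_neg_of_neg hp (by linarith)
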